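/- Let M be an almost Hermitian manifold with intrinsic torsion ξ. Then for any orthonormal frame e_i and any X, Y: ⟨ξ_{ξ_{e_i}X} Y, e_i⟩ = ⟨ξ_{ξ_{e_i}Y} X, e_i⟩ (the bilinear form (X,Y) ↦ ⟨ξ_{ξ_{e_i}X} Y, e_i⟩ is symmetric). -/

import Mathlib

open scoped RealInnerProductSpace BigOperators

/-- On an almost Hermitian manifold with intrinsic torsion `ξ` (which is
bilinear and satisfies `⟪ξ_X Y, Z⟫ = -⟪Y, ξ_X Z⟫`), for any orthonormal frame `e_i` and
all `X, Y` one has `⟨ξ_{ξ_{e_i}X} Y, e_i⟩ = ⟨ξ_{ξ_{e_i}Y} X, e_i⟩` (summation convention):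
the bilinear form `(X,Y) ↦ ⟨ξ_{ξ_{e_i}X} Y, e_i⟩` is symmetric. -/
theorem statement7 {V : Type*} [NormedAddCommGroup V] [InnerProductSpace ℝ V]
    (m : ℕ)
    (J : V →ₗ[ℝ] V)
    (hJ2 : ∀ x : V, J (J x) = -x)
    (hJorth : ∀ x y : V, ⟪J x, J y⟫ = ⟪x, y⟫)
    (ξ : V → V → V)
    -- ξ is bilinear
    (hadd1 : ∀ X X' Y, ξ (X + X') Y = ξ X Y + ξ X' Y)
    (hsmul1 : ∀ (c : ℝ) X Y, ξ (c • X) Y = c • ξ X Y)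
    (hadd2 : ∀ X Y Y', ξ X (Y + Y') = ξ X Y + ξ X Y')
    (hsmul2 : ∀ (c : ℝ) X Y, ξ X (c • Y) = c • ξ X Y)
    -- ξ_X is skew-adjoint
    (hskew : ∀ X Y Z, ⟪ξ X Y, Z⟫ = -⟪Y, ξ X Z⟫)
    -- an orthonormal frame
    (e : Fin m → V)
    (horth : ∀ i j, ⟪e i, e j⟫ = if i = j then (1 : ℝ) else 0)
    (hcomplete : ∀ v w : V, ⟪v, w⟫ = ∑ i, ⟪v, e i⟫ * ⟪w, e i⟫) :
    ∀ X Y, ∑ i, ⟪ξ (ξ (e i) X) Y, e i⟫ = ∑ i, ⟪ξ (ξ (e i) Y) X, e i⟫ := by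
  -- ξ 0 Y = 0
  have hzero : ∀ Y, ξ 0 Y = 0 := by
    intro Y
    have := hsmul1 0 0 Y
    simpa using this
  -- expansion of any vector in the frame
  have hexpand : ∀ v : V, v = ∑ j, ⟪v, e j⟫ • e j := by
    intro v
    apply ext_inner_right ℝ
    intro w
    rw [hcomplete v w]
    rw [sum_inner]
    congr 1
    ext j
    rw [real_inner_smul_left, real_inner_comm (e j) w]
  -- ξ of a finite sum in the first argument
  have hsum1 : ∀ (Y : V) (f : Fin m → V), ξ (∑ j, f j) Y = ∑ j, ξ (f j) Y := by
    intro Y f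
    classical
    induction (Finset.univ : Finset (Fin m)) using Finset.induction with
    | empty => simpa using hzero Y
    | insert _ _ h ih =>
      rw [Finset.sum_insert h, Finset.sum_insert h, hadd1, ih]
  -- key expansion of each term
  have hterm : ∀ (X Y : V) (i : Fin m),
      ⟪ξ (ξ (e i) X) Y, e i⟫ = ∑ j, ⟪ξ (e i) X, e j⟫ * ⟪ξ (e j) Y, e i⟫ := by
    intro X Y i
    conv_lhs => rw [hexpand (ξ (e i) X)]
    rw [hsum1, sum_inner]
    congr 1
    ext j
    rw [hsmul1, real_inner_smul_left]
  intro X Y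
  calc ∑ i, ⟪ξ (ξ (e i) X) Y, e i⟫
      = ∑ i, ∑ j, ⟪ξ (e i) X, e j⟫ * ⟪ξ (e j) Y, e i⟫ := by
        exact Finset.sum_congr rfl fun i _ => hterm X Y i
    _ = ∑ j, ∑ i, ⟪ξ (e j) Y, e i⟫ * ⟪ξ (e i) X, e j⟫ := by
        rw [Finset.sum_comm]
        exact Finset.sum_congr rfl fun j _ => Finset.sum_congr rfl fun i _ =>
          mul_comm _ _
    _ = ∑ i, ⟪ξ (ξ (e i) Y) X, e i⟫ := by
        exact (Finset.sum_congr rfl fun i _ => (hterm Y X i)).symm
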